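/- Let ρ > 0, let ℓ ≥ 1, and let p_0, p_1, …, p_ℓ ∈ C be points with dist(p_i, p_{i+1}) ≤ ρ for all 0 ≤ i ≤ ℓ−1. Let a_0, …, a_ℓ ∈ A satisfy dist(a_i, (p_i)_A) ≤ ρ/√2 for all i, with a_0 = (p_0)_A and a_ℓ = (p_ℓ)_A, and let b_0, …, b_{ℓ−1} ∈ B satisfy dist(b_j, (p_j)_B) ≤ ρ/√2 and dist(b_j, (p_{j+1})_B) ≤ ρ/√2 for all 0 ≤ j ≤ ℓ−1. Then there exists a continuous path γ : [0,1] → C with γ(0) = p_0 and γ(1) = p_ℓ whose image is contained in (⋃_{0 ≤ i ≤ ℓ} closedBall p_i ρ) ∩ ((⋃_{0 ≤ i ≤ ℓ} m(a_i)) ∪ (⋃_{0 ≤ j ≤ ℓ−1} m(b_j))). In particular, if F ⊆ C is a set (the free space) such that closedBall p_i ρ ⊆ F for every i, then the image of γ is contained in F. -/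

import Mathlib

/-!
Put `q i := (a i, (p i)_B)`, so that `q 0 = p 0` and `q ℓ = p ℓ`; it suffices to join consecutive
`q i` and `q (i+1)`. With `μ` the midpoint of `(p i)_A` and `(p (i+1))_A`, go
`q i → (a i, b i) → (μ, b i) → (a (i+1), b i) → q (i+1)`, along `m(a i)`, `m(b i)`, `m(b i)`,
`m(a (i+1))`. The first two legs stay in the box of half-widths `ρ/√2` around `p i` and the last
two in the one around `p (i+1)`, because `μ` is within `ρ/2 ≤ ρ/√2` of both. A box is convex, so
each leg can be a straight segment, and it lies in the ball of radius `ρ` because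
`(ρ/√2)² + (ρ/√2)² = ρ²`.
-/

open Metric

/-- The configuration space `C = A ×₂ B`, the ℓ²-product of two Euclidean spaces. -/
abbrev Csp (k m : ℕ) : Type :=
  WithLp 2 (EuclideanSpace ℝ (Fin k) × EuclideanSpace ℝ (Fin m))

/-- The `A`-component of a point of `C`. -/
noncomputable def fstC {k m : ℕ} (x : Csp k m) : EuclideanSpace ℝ (Fin k) :=
  (WithLp.equiv 2 _ x).1

/-- The `B`-component of a point of `C`. -/
noncomputable def sndC {k m : ℕ} (x : Csp k m) : EuclideanSpace ℝ (Fin m) :=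
  (WithLp.equiv 2 _ x).2

/-- The manifold `m(a) = {a} × B ⊆ C` determined by a point `a ∈ A`. -/
def mA {k m : ℕ} (a : EuclideanSpace ℝ (Fin k)) : Set (Csp k m) :=
  {x | fstC x = a}

/-- The manifold `m(b) = A × {b} ⊆ C` determined by a point `b ∈ B`. -/
def mB {k m : ℕ} (b : EuclideanSpace ℝ (Fin m)) : Set (Csp k m) :=
  {x | sndC x = b}

theorem JoinedIn.of_fin_chain {X : Type*} [TopologicalSpace X] {S : Set X} :
    ∀ {n : ℕ} {x : Fin (n + 1) → X}, x 0 ∈ S →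
      (∀ i : Fin n, JoinedIn S (x i.castSucc) (x i.succ)) → JoinedIn S (x 0) (x (Fin.last n))
  | 0, _, h₀, _ => JoinedIn.refl h₀
  | n + 1, x, h₀, h =>
    (JoinedIn.of_fin_chain (x := x ∘ Fin.castSucc) h₀ fun i => h i.castSucc).trans (h (Fin.last n))

theorem JoinedIn.of_convex {E : Type*} [NormedAddCommGroup E] [NormedSpace ℝ E] {K S : Set E}
    {x y : E} (hK : Convex ℝ K) (hKS : K ⊆ S) (hx : x ∈ K) (hy : y ∈ K) : JoinedIn S x y :=
  .of_segment_subset ((hK.segment_subset hx hy).trans hKS)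

section Csp

variable {k m : ℕ}

noncomputable def mkC (x : EuclideanSpace ℝ (Fin k)) (y : EuclideanSpace ℝ (Fin m)) : Csp k m :=
  (WithLp.equiv 2 _).symm (x, y)

lemma mkC_fstC_sndC (z : Csp k m) : mkC (fstC z) (sndC z) = z := rfl

lemma isLinearMap_fstC : IsLinearMap ℝ (fstC : Csp k m → _) := ⟨fun _ _ => rfl, fun _ _ => rfl⟩

lemma isLinearMap_sndC : IsLinearMap ℝ (sndC : Csp k m → _) := ⟨fun _ _ => rfl, fun _ _ => rfl⟩

lemma convex_mA (a : EuclideanSpace ℝ (Fin k)) : Convex ℝ (mA a : Set (Csp k m)) :=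
  (convex_singleton a).is_linear_preimage isLinearMap_fstC

lemma convex_mB (b : EuclideanSpace ℝ (Fin m)) : Convex ℝ (mB b : Set (Csp k m)) :=
  (convex_singleton b).is_linear_preimage isLinearMap_sndC

lemma dist_fstC_le (x y : Csp k m) : dist (fstC x) (fstC y) ≤ dist x y :=
  WithLp.dist_fst_le x y

def boxC (c : Csp k m) (r₁ r₂ : ℝ) : Set (Csp k m) :=
  fstC ⁻¹' closedBall (fstC c) r₁ ∩ sndC ⁻¹' closedBall (sndC c) r₂

lemma convex_boxC (c : Csp k m) (r₁ r₂ : ℝ) : Convex ℝ (boxC c r₁ r₂) :=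
  ((convex_closedBall _ _).is_linear_preimage isLinearMap_fstC).inter
    ((convex_closedBall _ _).is_linear_preimage isLinearMap_sndC)

lemma boxC_subset_closedBall {c : Csp k m} {r₁ r₂ r : ℝ} (hr : 0 ≤ r)
    (h : r₁ ^ 2 + r₂ ^ 2 ≤ r ^ 2) : boxC c r₁ r₂ ⊆ closedBall c r := by
  rintro x ⟨hx₁, hx₂⟩
  have h₁ : dist (fstC x) (fstC c) ≤ r₁ := hx₁
  have h₂ : dist (sndC x) (sndC c) ≤ r₂ := hx₂
  rw [mem_closedBall, WithLp.prod_dist_eq_of_L2, Real.sqrt_le_left hr]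
  have := pow_le_pow_left₀ dist_nonneg h₁ 2
  have := pow_le_pow_left₀ dist_nonneg h₂ 2
  change dist (fstC x) (fstC c) ^ 2 + dist (sndC x) (sndC c) ^ 2 ≤ r ^ 2
  linarith

lemma joinedIn_closedBall_inter_mA_union_mB {c : Csp k m} {a x : EuclideanSpace ℝ (Fin k)}
    {b : EuclideanSpace ℝ (Fin m)} {r₁ r₂ ρ : ℝ} (hρ : 0 ≤ ρ) (h : r₁ ^ 2 + r₂ ^ 2 ≤ ρ ^ 2)
    (ha : dist a (fstC c) ≤ r₁) (hx : dist x (fstC c) ≤ r₁) (hb : dist b (sndC c) ≤ r₂) :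
    JoinedIn (closedBall c ρ ∩ (mA a ∪ mB b)) (mkC a (sndC c)) (mkC x b) := by
  have hstart : mkC a (sndC c) ∈ boxC c r₁ r₂ :=
    ⟨ha, mem_closedBall_self (dist_nonneg.trans hb)⟩
  have hcorner : mkC a b ∈ boxC c r₁ r₂ := ⟨ha, hb⟩
  have hend : mkC x b ∈ boxC c r₁ r₂ := ⟨hx, hb⟩
  have leg {K : Set (Csp k m)} (hK : Convex ℝ K) (hKS : K ⊆ mA a ∪ mB b) {y z : Csp k m}
      (hy : y ∈ K ∩ boxC c r₁ r₂) (hz : z ∈ K ∩ boxC c r₁ r₂) :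
      JoinedIn (closedBall c ρ ∩ (mA a ∪ mB b)) y z :=
    .of_convex (hK.inter (convex_boxC c r₁ r₂))
      (fun w hw => ⟨boxC_subset_closedBall hρ h hw.2, hKS hw.1⟩) hy hz
  exact (leg (convex_mA a) Set.subset_union_left ⟨rfl, hstart⟩ ⟨rfl, hcorner⟩).trans
    (leg (convex_mB b) Set.subset_union_right ⟨rfl, hcorner⟩ ⟨rfl, hend⟩)

lemma joinedIn_mkC_of_dist_le {p p' : Csp k m} {a a' : EuclideanSpace ℝ (Fin k)}
    {b : EuclideanSpace ℝ (Fin m)} {ρ : ℝ} (hρ : 0 ≤ ρ) (hp : dist p p' ≤ ρ)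
    (ha : dist a (fstC p) ≤ ρ / √2) (ha' : dist a' (fstC p') ≤ ρ / √2)
    (hb : dist b (sndC p) ≤ ρ / √2) (hb' : dist b (sndC p') ≤ ρ / √2) :
    JoinedIn (closedBall p ρ ∩ (mA a ∪ mB b) ∪ closedBall p' ρ ∩ (mA a' ∪ mB b))
      (mkC a (sndC p)) (mkC a' (sndC p')) := by
  have hsq : (ρ / √2) ^ 2 + (ρ / √2) ^ 2 ≤ ρ ^ 2 := by
    rw [div_pow, Real.sq_sqrt zero_le_two]; linarith
  have hhalf : dist (fstC p) (fstC p') / 2 ≤ ρ / √2 :=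
    calc dist (fstC p) (fstC p') / 2 ≤ ρ / 2 := by linarith [dist_fstC_le p p']
      _ ≤ ρ / √2 := div_le_div_of_nonneg_left hρ (by positivity)
          ((Real.sqrt_le_left zero_le_two).2 (by norm_num))
  set μ := midpoint ℝ (fstC p) (fstC p')
  have hμ : dist μ (fstC p) ≤ ρ / √2 := by rw [dist_midpoint_left]; simpa [div_eq_inv_mul] using hhalf
  have hμ' : dist μ (fstC p') ≤ ρ / √2 := by rw [dist_midpoint_right]; simpa [div_eq_inv_mul] using hhalf
  exact ((joinedIn_closedBall_inter_mA_union_mB hρ hsq ha hμ hb).mono Set.subset_union_left).trans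
    ((joinedIn_closedBall_inter_mA_union_mB hρ hsq ha' hμ' hb').mono Set.subset_union_right).symm

end Csp

theorem stmt3_general (k m : ℕ) (ρ : ℝ) (hρ : 0 < ρ) (ℓ : ℕ)
    (p : Fin (ℓ + 1) → Csp k m)
    (hp : ∀ i : Fin ℓ, dist (p i.castSucc) (p i.succ) ≤ ρ)
    (a : Fin (ℓ + 1) → EuclideanSpace ℝ (Fin k))
    (ha : ∀ i, dist (a i) (fstC (p i)) ≤ ρ / Real.sqrt 2)
    (ha0 : a 0 = fstC (p 0)) (haℓ : a (Fin.last ℓ) = fstC (p (Fin.last ℓ)))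
    (b : Fin ℓ → EuclideanSpace ℝ (Fin m))
    (hb₁ : ∀ j : Fin ℓ, dist (b j) (sndC (p j.castSucc)) ≤ ρ / Real.sqrt 2)
    (hb₂ : ∀ j : Fin ℓ, dist (b j) (sndC (p j.succ)) ≤ ρ / Real.sqrt 2) :
    ∃ γ : Path (p 0) (p (Fin.last ℓ)),
      (∀ t, γ t ∈ (⋃ i, closedBall (p i) ρ) ∩
        ((⋃ i, mA (a i)) ∪ (⋃ j, mB (b j)))) ∧
      ∀ F : Set (Csp k m), (∀ i, closedBall (p i) ρ ⊆ F) → ∀ t, γ t ∈ F := by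
  set S := (⋃ i, closedBall (p i) ρ) ∩ ((⋃ i, mA (a i)) ∪ (⋃ j, mB (b j)))
  have hS (i : Fin (ℓ + 1)) (j : Fin ℓ) : closedBall (p i) ρ ∩ (mA (a i) ∪ mB (b j)) ⊆ S :=
    Set.inter_subset_inter (Set.subset_iUnion (fun i => closedBall (p i) ρ) i)
      (Set.union_subset_union (Set.subset_iUnion (fun i => mA (a i)) i)
        (Set.subset_iUnion (fun j => mB (b j)) j))
  let q i := mkC (a i) (sndC (p i))
  have hq₀ : q 0 = p 0 := by simp only [q, ha0, mkC_fstC_sndC]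
  have hqℓ : q (Fin.last ℓ) = p (Fin.last ℓ) := by simp only [q, haℓ, mkC_fstC_sndC]
  have hjoined : JoinedIn S (q 0) (q (Fin.last ℓ)) :=
    .of_fin_chain (hq₀ ▸ ⟨Set.mem_iUnion_of_mem 0 (mem_closedBall_self hρ.le),
      .inl (Set.mem_iUnion_of_mem 0 ha0.symm)⟩) fun j =>
      (joinedIn_mkC_of_dist_le hρ.le (hp j) (ha _) (ha _) (hb₁ j) (hb₂ j)).mono
        (Set.union_subset (hS _ j) (hS _ j))
  rw [hq₀, hqℓ] at hjoined
  obtain ⟨γ, hγ⟩ := hjoined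
  refine ⟨γ, hγ, fun F hF t => ?_⟩
  obtain ⟨_, ⟨i, rfl⟩, hi⟩ := (hγ t).1
  exact hF i hi

/-- Given waypoints `p 0, …, p ℓ` at consecutive distance at most `ρ`,
`ρ/√2`-intersecting manifolds `m(a i)` for each `p i` (with `a 0, a ℓ` the exact
projections of the endpoints), and manifolds `m(b j)` simultaneously
`ρ/√2`-intersecting for `p j` and `p (j+1)`, there is a continuous path from `p 0`
to `p ℓ` lying on the union of the manifolds and inside the union of the balls
`closedBall (p i) ρ`; in particular its image lies in any free space `F`
containing all these balls. -/
theorem stmt3 (k m : ℕ) (ρ : ℝ) (hρ : 0 < ρ) (ℓ : ℕ) (hℓ : 1 ≤ ℓ)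
    (p : Fin (ℓ + 1) → Csp k m)
    (hp : ∀ i : Fin ℓ, dist (p i.castSucc) (p i.succ) ≤ ρ)
    (a : Fin (ℓ + 1) → EuclideanSpace ℝ (Fin k))
    (ha : ∀ i, dist (a i) (fstC (p i)) ≤ ρ / Real.sqrt 2)
    (ha0 : a 0 = fstC (p 0)) (haℓ : a (Fin.last ℓ) = fstC (p (Fin.last ℓ)))
    (b : Fin ℓ → EuclideanSpace ℝ (Fin m))
    (hb₁ : ∀ j : Fin ℓ, dist (b j) (sndC (p j.castSucc)) ≤ ρ / Real.sqrt 2)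
    (hb₂ : ∀ j : Fin ℓ, dist (b j) (sndC (p j.succ)) ≤ ρ / Real.sqrt 2) :
    ∃ γ : Path (p 0) (p (Fin.last ℓ)),
      (∀ t, γ t ∈ (⋃ i, closedBall (p i) ρ) ∩
        ((⋃ i, mA (a i)) ∪ (⋃ j, mB (b j)))) ∧
      ∀ F : Set (Csp k m), (∀ i, closedBall (p i) ρ ⊆ F) → ∀ t, γ t ∈ F :=
  stmt3_general k m ρ hρ ℓ p hp a ha ha0 haℓ b hb₁ hb₂
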